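/- (2^r recursive family) Define 2×2 arrays A_2(x) with rows (x, x+1), (x+2, x+3) and A'_2(x) with rows (x+3, x+1), (x+2, x). For r > 1 recursively define the 2^r × 2^r arrays A_{2^r}(x) with diagonal blocks I_{2^{r−1}}(x) and I_{2^{r−1}}(x+1) and off-diagonal blocks A_{2^{r−1}}(x+2) (top right) and A'_{2^{r−1}}(x+2) (bottom left), and A'_{2^r}(x) identical except the two diagonal blocks are swapped. Then for all r ≥ 1, the pair {A_{2^r}(x), A'_{2^r}(x)} is Blackburn-compatible with respect to I_{2^r}(t) for any t not among the integers of A_{2^r}(x) and A'_{2^r}(x); moreover each of A_{2^r}(x) and A'_{2^r}(x) has exactly 2^r − r − 1 stars per column, and the lifted 2^{r+1} × 2^{r+1} block array (with A_{2^r}(x), A'_{2^r}(x) on the diagonal and integer-disjoint copies of I_{2^r} off-diagonal) is a 2^r-regular (2^{r+1}, 2^{r+1}, 2^{r+1} − r − 2, 2r + 4) PDA. -/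

import Mathlib

open Finset

/-- Number of stars (`none`) in column `k` of the array `P`. -/
def colStars {f K : ℕ} (P : Fin f → Fin K → Option ℕ) (k : Fin K) : ℕ :=
  (Finset.univ.filter fun j => P j k = none).card

/-- `P` is a `(K, f, Z, S)` placement delivery array: an `f × K` array over `{∗} ∪ S`
(`none` encodes `∗`) with exactly `Z` stars in each column, every integer of `S`
occurring at least once (and all integer entries lying in `S`), satisfying the
Blackburn property. -/
def IsPDA {f K : ℕ} (P : Fin f → Fin K → Option ℕ) (Z : ℕ) (S : Finset ℕ) : Prop :=
  (∀ k, colStars P k = Z) ∧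
  (∀ s ∈ S, ∃ j k, P j k = some s) ∧
  (∀ j k s, P j k = some s → s ∈ S) ∧
  (∀ j₁ k₁ j₂ k₂ s, (j₁, k₁) ≠ (j₂, k₂) →
    P j₁ k₁ = some s → P j₂ k₂ = some s → P j₁ k₂ = none ∧ P j₂ k₁ = none)

/-- Every integer of `S` appears exactly `g` times in the array `P`. -/
def IsRegularPDA {f K : ℕ} (P : Fin f → Fin K → Option ℕ) (S : Finset ℕ) (g : ℕ) : Prop :=
  ∀ s ∈ S, ((Finset.univ : Finset (Fin f × Fin K)).filter
    (fun jk => P jk.1 jk.2 = some s)).card = g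

/-- `P₀` and `P₁` are Blackburn-compatible with respect to `Pstar`. -/
def BBCompat {n m : ℕ} (P₀ P₁ Pstar : Fin n → Fin m → Option ℕ) : Prop :=
  ∀ i₀ j₀ i₁ j₁ s, P₀ i₀ j₀ = some s → P₁ i₁ j₁ = some s →
    Pstar i₀ j₁ = none ∧ Pstar i₁ j₀ = none

/-- `Ig n t` is the `n × n` array with the integer `t` on the main diagonal and `∗`
elsewhere. -/
def Ig (n t : ℕ) : Fin n → Fin n → Option ℕ := fun i j => if i = j then some t else none

/-- Block-row index of a global index for an array built from `a × a` grids of `b`-sized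
blocks. -/
def blkIdx {a b : ℕ} (j : Fin (a * b)) : Fin a :=
  ⟨(j : ℕ) / b, Nat.div_lt_of_lt_mul (Nat.mul_comm a b ▸ j.isLt)⟩

/-- Within-block index of a global index. -/
def inIdx {a b : ℕ} (j : Fin (a * b)) : Fin b :=
  ⟨(j : ℕ) % b, Nat.mod_lt _ (by
    rcases Nat.eq_zero_or_pos b with h | h
    · exact absurd j.isLt (by simp [h])
    · exact h)⟩

/-- The recursive family `A_{2^r}(x)` (flag `false`) and `A'_{2^r}(x)` (flag `true`),
as `ℕ`-indexed arrays meaningful on `[0, 2^r) × [0, 2^r)`. -/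
def A2r : ℕ → Bool → ℕ → ℕ → ℕ → Option ℕ
  | 0, _, x, _, _ => some x
  | 1, false, x, i, j =>
      if i = 0 then (if j = 0 then some x else some (x + 1))
      else if j = 0 then some (x + 2) else some (x + 3)
  | 1, true, x, i, j =>
      if i = 0 then (if j = 0 then some (x + 3) else some (x + 1))
      else if j = 0 then some (x + 2) else some x
  | (r + 2), b, x, i, j =>
      if i < 2 ^ (r + 1) then
        if j < 2 ^ (r + 1) then
          (if i = j then some (if b then x + 1 else x) else none)
        else A2r (r + 1) false (x + 2) i (j - 2 ^ (r + 1))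
      else
        if j < 2 ^ (r + 1) then A2r (r + 1) true (x + 2) (i - 2 ^ (r + 1)) j
        else (if i = j then some (if b then x else x + 1) else none)

/-!
`A_{2^(r+2)}(x)` and the lifted array are both `2 × 2` block arrays whose diagonal blocks are of
one kind and whose off-diagonal blocks are of the other: arrays `I(t)` carrying a single integer,
or members `A(y)`, `A'(y)` of the recursive family. The Blackburn property of a block array
splits into the Blackburn property of each block and a compatibility condition for every pair of
blocks, which is vacuous when the two blocks share no integer. The only blocks sharing integers
are `A(y)` and `A'(y)`; sitting in opposite corners, their condition says that a common integer
never occurs at `(i, j)` and `(i', j')` with `i = j'` or `i' = j`, i.e. Blackburn compatibility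
with respect to `I(t)`, and this is proved by the same block recursion. Star and multiplicity
counts add up over the blocks; in particular every integer of `[x, x + 2r + 4)` occurs `2^r`
times in `A_{2^(r+1)}(x)`.
-/

def starCount (n : ℕ) (Q : ℕ → ℕ → Option ℕ) (k : ℕ) : ℕ :=
  #{i ∈ range n | Q i k = none}

def valueCount (n : ℕ) (Q : ℕ → ℕ → Option ℕ) (s : ℕ) : ℕ :=
  #{p ∈ range n ×ˢ range n | Q p.1 p.2 = some s}

def IsBlackburn (n : ℕ) (Q : ℕ → ℕ → Option ℕ) : Prop :=
  ∀ i j i' j' s, i < n → j < n → i' < n → j' < n → (i, j) ≠ (i', j') →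
    Q i j = some s → Q i' j' = some s → Q i j' = none ∧ Q i' j = none

/-- The Blackburn condition between blocks `P` and `Q` of a block array, `R` and `S` being the
blocks in the other two corners of the rectangle. -/
def BlackburnCompat (n : ℕ) (P Q R S : ℕ → ℕ → Option ℕ) : Prop :=
  ∀ i j i' j' s, i < n → j < n → i' < n → j' < n →
    P i j = some s → Q i' j' = some s → R i j' = none ∧ S i' j = none

def NoCommonValue (n : ℕ) (P Q : ℕ → ℕ → Option ℕ) : Prop :=
  ∀ i j i' j' s, i < n → j < n → i' < n → j' < n → P i j = some s → Q i' j' ≠ some s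

def diagArray (t : ℕ) : ℕ → ℕ → Option ℕ := fun i j => if i = j then some t else none

/-- Block `A a b` sits in block-row `a` and block-column `b`, `false` being the first half. -/
def blockArray (n : ℕ) (A : Bool → Bool → ℕ → ℕ → Option ℕ) : ℕ → ℕ → Option ℕ :=
  fun i j =>
    if i < n then (if j < n then A false false i j else A false true i (j - n))
    else (if j < n then A true false (i - n) j else A true true (i - n) (j - n))

def shiftIdx (n : ℕ) (a : Bool) (i : ℕ) : ℕ := bif a then n + i else i

section Blocks

variable {n : ℕ}

theorem valueCount_pos {Q : ℕ → ℕ → Option ℕ} {i j s : ℕ} (hi : i < n) (hj : j < n)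
    (h : Q i j = some s) : 0 < valueCount n Q s :=
  card_pos.2 ⟨(i, j), by simp [hi, hj, h]⟩

theorem exists_of_valueCount_pos {Q : ℕ → ℕ → Option ℕ} {s : ℕ}
    (h : 0 < valueCount n Q s) : ∃ i j, i < n ∧ j < n ∧ Q i j = some s := by
  obtain ⟨⟨i, j⟩, hij⟩ := card_pos.1 h
  simp only [mem_filter, mem_product, mem_range] at hij
  exact ⟨i, j, hij.1.1, hij.1.2, hij.2⟩

theorem mem_of_valueCount_eq_ite {Q : ℕ → ℕ → Option ℕ} {S : Finset ℕ} {g : ℕ}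
    (hcount : ∀ s, valueCount n Q s = if s ∈ S then g else 0) {i j s : ℕ} (hi : i < n)
    (hj : j < n) (h : Q i j = some s) : s ∈ S := by
  have hpos := valueCount_pos hi hj h
  rw [hcount] at hpos
  by_contra hs
  simp [hs] at hpos

theorem BlackburnCompat.symm {P Q R S : ℕ → ℕ → Option ℕ} (h : BlackburnCompat n P Q R S) :
    BlackburnCompat n Q P S R :=
  fun i j i' j' s hi hj hi' hj' hP hQ => (h i' j' i j s hi' hj' hi hj hQ hP).symm

theorem NoCommonValue.symm {P Q : ℕ → ℕ → Option ℕ} (h : NoCommonValue n P Q) :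
    NoCommonValue n Q P :=
  fun i j i' j' s hi hj hi' hj' hQ hP => h i' j' i j s hi' hj' hi hj hP hQ

theorem NoCommonValue.blackburnCompat {P Q : ℕ → ℕ → Option ℕ} (h : NoCommonValue n P Q)
    (R S : ℕ → ℕ → Option ℕ) : BlackburnCompat n P Q R S :=
  fun i j i' j' s hi hj hi' hj' hP hQ => absurd hQ (h i j i' j' s hi hj hi' hj' hP)

theorem blackburnCompat_none (P Q : ℕ → ℕ → Option ℕ) :
    BlackburnCompat n P Q (fun _ _ => none) (fun _ _ => none) :=
  fun _ _ _ _ _ _ _ _ _ _ _ => ⟨rfl, rfl⟩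

theorem exists_shiftIdx {i : ℕ} (hi : i < n + n) : ∃ a i₀, i₀ < n ∧ shiftIdx n a i₀ = i := by
  by_cases h : i < n
  · exact ⟨false, i, h, rfl⟩
  · exact ⟨true, i - n, by omega, by simp only [shiftIdx, cond_true]; omega⟩

theorem blockArray_shiftIdx (A : Bool → Bool → ℕ → ℕ → Option ℕ) (a b : Bool) {i j : ℕ}
    (hi : i < n) (hj : j < n) : blockArray n A (shiftIdx n a i) (shiftIdx n b j) = A a b i j := by
  cases a <;> cases b <;> simp [blockArray, shiftIdx, hi, hj]

theorem sum_range_add_self {M : Type*} [AddCommMonoid M] (f : ℕ → M) :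
    ∑ i ∈ range (n + n), f i = ∑ a : Bool, ∑ i ∈ range n, f (shiftIdx n a i) := by
  simp [sum_range_add, shiftIdx, add_comm]

theorem starCount_blockArray (A : Bool → Bool → ℕ → ℕ → Option ℕ) (b : Bool) {k : ℕ}
    (hk : k < n) :
    starCount (n + n) (blockArray n A) (shiftIdx n b k) = ∑ a, starCount n (A a b) k := by
  simp only [starCount, card_filter, sum_range_add_self]
  exact sum_congr rfl fun a _ => sum_congr rfl fun i hi => by
    rw [blockArray_shiftIdx A a b (mem_range.1 hi) hk]

theorem valueCount_blockArray (A : Bool → Bool → ℕ → ℕ → Option ℕ) (s : ℕ) :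
    valueCount (n + n) (blockArray n A) s = ∑ a, ∑ b, valueCount n (A a b) s := by
  simp only [valueCount, card_filter, sum_product, sum_range_add_self]
  refine sum_congr rfl fun a _ => ?_
  rw [sum_comm]
  exact sum_congr rfl fun b _ => sum_congr rfl fun i hi => sum_congr rfl fun j hj => by
    rw [blockArray_shiftIdx A a b (mem_range.1 hi) (mem_range.1 hj)]

theorem BlackburnCompat.blockArray {P Q R S : Bool → Bool → ℕ → ℕ → Option ℕ}
    (h : ∀ a b c d, BlackburnCompat n (P a b) (Q c d) (R a d) (S c b)) :
    BlackburnCompat (n + n) (blockArray n P) (blockArray n Q) (blockArray n R)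
      (blockArray n S) := by
  intro _ _ _ _ s hi hj hi' hj' hP hQ
  obtain ⟨a, i, hi₀, rfl⟩ := exists_shiftIdx hi
  obtain ⟨b, j, hj₀, rfl⟩ := exists_shiftIdx hj
  obtain ⟨c, i', hi'₀, rfl⟩ := exists_shiftIdx hi'
  obtain ⟨d, j', hj'₀, rfl⟩ := exists_shiftIdx hj'
  rw [blockArray_shiftIdx _ _ _ hi₀ hj₀] at hP
  rw [blockArray_shiftIdx _ _ _ hi'₀ hj'₀] at hQ
  rw [blockArray_shiftIdx _ _ _ hi₀ hj'₀, blockArray_shiftIdx _ _ _ hi'₀ hj₀]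
  exact h a b c d i j i' j' s hi₀ hj₀ hi'₀ hj'₀ hP hQ

theorem IsBlackburn.blockArray {A : Bool → Bool → ℕ → ℕ → Option ℕ}
    (hblock : ∀ a b, IsBlackburn n (A a b))
    (hcompat : ∀ a b c d, (a, b) ≠ (c, d) → BlackburnCompat n (A a b) (A c d) (A a d) (A c b)) :
    IsBlackburn (n + n) (blockArray n A) := by
  intro _ _ _ _ s hi hj hi' hj' hne hP hQ
  obtain ⟨a, i, hi₀, rfl⟩ := exists_shiftIdx hi
  obtain ⟨b, j, hj₀, rfl⟩ := exists_shiftIdx hj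
  obtain ⟨c, i', hi'₀, rfl⟩ := exists_shiftIdx hi'
  obtain ⟨d, j', hj'₀, rfl⟩ := exists_shiftIdx hj'
  rw [blockArray_shiftIdx _ _ _ hi₀ hj₀] at hP
  rw [blockArray_shiftIdx _ _ _ hi'₀ hj'₀] at hQ
  rw [blockArray_shiftIdx _ _ _ hi₀ hj'₀, blockArray_shiftIdx _ _ _ hi'₀ hj₀]
  by_cases hblk : (a, b) = (c, d)
  · obtain ⟨rfl, rfl⟩ := Prod.ext_iff.1 hblk
    exact hblock a b i j i' j' s hi₀ hj₀ hi'₀ hj'₀ (fun h => hne (by simp_all)) hP hQ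
  · exact hcompat a b c d hblk i j i' j' s hi₀ hj₀ hi'₀ hj'₀ hP hQ

theorem diagArray_eq_some {t i j s : ℕ} (h : diagArray t i j = some s) : i = j ∧ t = s := by
  unfold diagArray at h
  split_ifs at h with hij
  exact ⟨hij, Option.some.inj h⟩

theorem isBlackburn_diagArray (t : ℕ) : IsBlackburn n (diagArray t) := by
  intro i j i' j' s _ _ _ _ hne h h'
  obtain ⟨rfl, -⟩ := diagArray_eq_some h
  obtain ⟨rfl, -⟩ := diagArray_eq_some h'
  have : i ≠ i' := fun h => hne (by rw [h])
  simp [diagArray, this, this.symm]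

theorem NoCommonValue.diagArray_right {P : ℕ → ℕ → Option ℕ} {t : ℕ}
    (h : ∀ i j, i < n → j < n → P i j ≠ some t) : NoCommonValue n P (diagArray t) := by
  intro i j i' j' s hi hj _ _ hP hQ
  obtain ⟨-, rfl⟩ := diagArray_eq_some hQ
  exact h i j hi hj hP

theorem NoCommonValue.diagArray_of_valueCount {Q : ℕ → ℕ → Option ℕ} {S : Finset ℕ} {g t : ℕ}
    (hcount : ∀ s, valueCount n Q s = if s ∈ S then g else 0) (ht : t ∉ S) :
    NoCommonValue n Q (diagArray t) :=
  NoCommonValue.diagArray_right fun _ _ hi hj h => ht (mem_of_valueCount_eq_ite hcount hi hj h)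

theorem noCommonValue_diagArray {t t' : ℕ} (h : t ≠ t') :
    NoCommonValue n (diagArray t) (diagArray t') :=
  NoCommonValue.diagArray_right fun _ _ _ _ hP => h (diagArray_eq_some hP).2

theorem starCount_diagArray (t : ℕ) {k : ℕ} (hk : k < n) : starCount n (diagArray t) k = n - 1 := by
  simp [starCount, diagArray, filter_ne', hk]

theorem valueCount_diagArray (t s : ℕ) : valueCount n (diagArray t) s = if t = s then n else 0 := by
  split_ifs with h
  · simp [valueCount, diagArray, h, ← diag_eq_filter]
  · simp [valueCount, diagArray, h]

theorem diagArray_eq_blockArray (t : ℕ) :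
    diagArray t = blockArray n (fun a c => if a = c then diagArray t else fun _ _ => none) := by
  funext i j
  simp only [blockArray, diagArray, if_true, Bool.false_eq_true, Bool.true_eq_false, if_false]
  split_ifs <;> first | rfl | omega

end Blocks

theorem A2r_succ_succ (r : ℕ) (b : Bool) (x : ℕ) :
    A2r (r + 2) b x = blockArray (2 ^ (r + 1))
      (fun a c => if a = c then diagArray (if a = b then x else x + 1)
        else A2r (r + 1) a (x + 2)) := by
  funext i j
  rw [A2r]
  cases b <;> simp only [blockArray, diagArray, if_true, if_false, Bool.false_eq_true,
    Bool.true_eq_false] <;> split_ifs <;> first | rfl | omega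


theorem A2r_valueCount (r : ℕ) (b : Bool) (x s : ℕ) :
    valueCount (2 ^ (r + 1)) (A2r (r + 1) b x) s =
      if s ∈ Ico x (x + 2 * r + 4) then 2 ^ r else 0 := by
  induction r generalizing b x with
  | zero =>
    rw [valueCount, card_filter, sum_product]
    simp only [zero_add, pow_one, sum_range_succ, sum_range_zero]
    cases b <;> simp [A2r] <;> split_ifs <;> omega
  | succ r ih =>
    rw [A2r_succ_succ, pow_succ 2 (r + 1), mul_two, valueCount_blockArray]
    cases b <;> simp only [Fintype.sum_bool, if_true, if_false, Bool.false_eq_true,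
      Bool.true_eq_false, valueCount_diagArray, ih] <;>
      simp only [mem_Ico, pow_succ] <;> split_ifs <;> omega

theorem A2r_starCount (r : ℕ) (b : Bool) (x : ℕ) {k : ℕ} (hk : k < 2 ^ (r + 1)) :
    starCount (2 ^ (r + 1)) (A2r (r + 1) b x) k = 2 ^ (r + 1) - (r + 2) := by
  induction r generalizing b x k with
  | zero =>
    rw [starCount, card_filter]
    simp only [zero_add, pow_one, sum_range_succ, sum_range_zero] at hk ⊢
    interval_cases k <;> cases b <;> simp [A2r]
  | succ r ih =>
    rw [pow_succ 2 (r + 1), mul_two] at hk ⊢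
    obtain ⟨c, k, hk₀, rfl⟩ := exists_shiftIdx hk
    rw [A2r_succ_succ, starCount_blockArray _ _ hk₀]
    have : r + 2 ≤ 2 ^ (r + 1) := Nat.lt_two_pow_self
    cases c <;> simp only [Fintype.sum_bool, if_true, if_false, Bool.false_eq_true,
      Bool.true_eq_false, starCount_diagArray _ hk₀, ih _ _ hk₀] <;> omega

theorem A2r_mem_Ico {r : ℕ} {b : Bool} {x i j s : ℕ} (hi : i < 2 ^ (r + 1)) (hj : j < 2 ^ (r + 1))
    (h : A2r (r + 1) b x i j = some s) : s ∈ Ico x (x + 2 * r + 4) :=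
  mem_of_valueCount_eq_ite (A2r_valueCount r b x) hi hj h

theorem noCommonValue_A2r_diagArray {r : ℕ} {a : Bool} {x c : ℕ} (hc : c < x) :
    NoCommonValue (2 ^ (r + 1)) (A2r (r + 1) a x) (diagArray c) :=
  NoCommonValue.diagArray_right fun _ _ hi hj h => by
    have := mem_Ico.1 (A2r_mem_Ico hi hj h)
    omega

theorem A2r_blackburnCompat (r x t t' : ℕ) :
    BlackburnCompat (2 ^ (r + 1)) (A2r (r + 1) false x) (A2r (r + 1) true x)
      (diagArray t) (diagArray t') := by
  induction r generalizing x t t' with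
  | zero =>
    intro i j i' j' s hi hj hi' hj' h h'
    simp only [zero_add, pow_one] at hi hj hi' hj'
    interval_cases i <;> interval_cases j <;> interval_cases i' <;> interval_cases j' <;>
      simp [A2r] at h h' <;> simp [diagArray] <;> omega
  | succ r ih =>
    rw [A2r_succ_succ, A2r_succ_succ, diagArray_eq_blockArray (n := 2 ^ (r + 1)) t,
      diagArray_eq_blockArray t', pow_succ 2 (r + 1), mul_two]
    refine BlackburnCompat.blockArray fun a b c d => ?_
    -- Blocks sharing an integer are off-diagonal: either one copy of `A(x+2)`, facing empty
    -- blocks of `I(t)`, or `A(x+2)` and `A'(x+2)`, which is the induction hypothesis.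
    cases a <;> cases b <;> cases c <;> cases d <;>
      simp only [if_true, if_false, Bool.false_eq_true, Bool.true_eq_false] <;>
      first
      | exact blackburnCompat_none _ _
      | exact ih _ _ _
      | exact (ih _ _ _).symm
      | exact (noCommonValue_diagArray (by omega)).blackburnCompat _ _
      | exact (noCommonValue_A2r_diagArray (by omega)).blackburnCompat _ _
      | exact (noCommonValue_A2r_diagArray (by omega)).symm.blackburnCompat _ _

theorem A2r_isBlackburn (r : ℕ) (b : Bool) (x : ℕ) :
    IsBlackburn (2 ^ (r + 1)) (A2r (r + 1) b x) := by
  induction r generalizing b x with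
  | zero =>
    intro i j i' j' s hi hj hi' hj' hne h h'
    simp only [zero_add, pow_one] at hi hj hi' hj'
    interval_cases i <;> interval_cases j <;> interval_cases i' <;> interval_cases j' <;>
      cases b <;> simp [A2r] at h h' hne <;> omega
  | succ r ih =>
    rw [A2r_succ_succ, pow_succ 2 (r + 1), mul_two]
    refine IsBlackburn.blockArray (fun a c => ?_) fun a b' c d hne => ?_
    · split_ifs <;> first | exact isBlackburn_diagArray _ | exact ih _ _
    · cases a <;> cases b' <;> cases c <;> cases d <;> cases b <;>
        simp only [if_true, if_false, Bool.false_eq_true, Bool.true_eq_false, ne_eq,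
          not_true_eq_false] at hne ⊢ <;>
        first
        | exact A2r_blackburnCompat _ _ _ _
        | exact (A2r_blackburnCompat _ _ _ _).symm
        | exact (noCommonValue_diagArray (by omega)).blackburnCompat _ _
        | exact (noCommonValue_A2r_diagArray (by omega)).blackburnCompat _ _
        | exact (noCommonValue_A2r_diagArray (by omega)).symm.blackburnCompat _ _

section FinArrays

variable {N : ℕ}

theorem colStars_eq_starCount (Q : ℕ → ℕ → Option ℕ) (k : Fin N) :
    colStars (fun i j : Fin N => Q i j) k = starCount N Q k := by
  rw [colStars, starCount, card_filter, card_filter]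
  exact Fin.sum_univ_eq_sum_range (fun i => if Q i k = none then 1 else 0) N

theorem card_filter_eq_valueCount (Q : ℕ → ℕ → Option ℕ) (s : ℕ) :
    #{p : Fin N × Fin N | Q p.1 p.2 = some s} = valueCount N Q s := by
  rw [valueCount, card_filter, card_filter, Fintype.sum_prod_type, sum_product,
    ← Fin.sum_univ_eq_sum_range]
  exact sum_congr rfl fun i _ =>
    Fin.sum_univ_eq_sum_range (fun j => if Q i j = some s then 1 else 0) N

theorem BlackburnCompat.bbCompat {P Q : ℕ → ℕ → Option ℕ} {t : ℕ}
    (h : BlackburnCompat N P Q (diagArray t) (diagArray t)) :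
    BBCompat (fun i j : Fin N => P i j) (fun i j : Fin N => Q i j) (Ig N t) := by
  intro i j i' j' s hP hQ
  simpa [Ig, diagArray, Fin.val_inj] using h i j i' j' s i.2 j.2 i'.2 j'.2 hP hQ

theorem isPDA_of_valueCount {Q : ℕ → ℕ → Option ℕ} {Z g : ℕ} {S : Finset ℕ} (hg : 0 < g)
    (hstar : ∀ k < N, starCount N Q k = Z)
    (hcount : ∀ s, valueCount N Q s = if s ∈ S then g else 0) (hQ : IsBlackburn N Q) :
    IsPDA (fun i j : Fin N => Q i j) Z S ∧ IsRegularPDA (fun i j : Fin N => Q i j) S g := by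
  refine ⟨⟨fun k => ?_, fun s hs => ?_, fun j k s h => ?_, fun j k j' k' s hne h h' => ?_⟩,
    fun s hs => ?_⟩
  · rw [colStars_eq_starCount, hstar k k.2]
  · obtain ⟨i, j, hi, hj, h⟩ := exists_of_valueCount_pos (by rw [hcount, if_pos hs]; exact hg)
    exact ⟨⟨i, hi⟩, ⟨j, hj⟩, h⟩
  · exact mem_of_valueCount_eq_ite hcount j.2 k.2 h
  · exact hQ j k j' k' s j.2 k.2 j'.2 k'.2 (by simpa [Fin.val_inj] using hne) h h'
  · rw [card_filter_eq_valueCount, hcount, if_pos hs]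

end FinArrays

def liftArray (n : ℕ) (P₀ P₁ : ℕ → ℕ → Option ℕ) (t₀ t₁ : ℕ) : ℕ → ℕ → Option ℕ :=
  fun i j =>
    if i < n then
      if j < n then P₀ i j
      else if i + n = j then some t₀ else none
    else
      if j < n then (if i = j + n then some t₁ else none)
      else P₁ (i - n) (j - n)

theorem liftArray_eq_blockArray (n : ℕ) (P₀ P₁ : ℕ → ℕ → Option ℕ) (t₀ t₁ : ℕ) :
    liftArray n P₀ P₁ t₀ t₁ = blockArray n
      (fun a c => if a = c then (bif a then P₁ else P₀)
        else diagArray (bif a then t₁ else t₀)) := by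
  funext i j
  simp only [liftArray, blockArray, diagArray, if_true, if_false, Bool.false_eq_true,
    Bool.true_eq_false, cond_true, cond_false]
  split_ifs <;> first | rfl | omega

theorem liftArray_isPDA {n Z g : ℕ} {P₀ P₁ : ℕ → ℕ → Option ℕ} {S : Finset ℕ} {t₀ t₁ : ℕ}
    (hn : 0 < n) (hg : g + g = n) (hP₀ : IsBlackburn n P₀) (hP₁ : IsBlackburn n P₁)
    (hcompat : BlackburnCompat n P₀ P₁ (diagArray t₀) (diagArray t₁))
    (hstar₀ : ∀ k < n, starCount n P₀ k = Z) (hstar₁ : ∀ k < n, starCount n P₁ k = Z)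
    (hcount₀ : ∀ s, valueCount n P₀ s = if s ∈ S then g else 0)
    (hcount₁ : ∀ s, valueCount n P₁ s = if s ∈ S then g else 0)
    (ht₀ : t₀ ∉ S) (ht₁ : t₁ ∉ S) (hne : t₀ ≠ t₁) :
    IsPDA (fun i j : Fin (n + n) => liftArray n P₀ P₁ t₀ t₁ i j) (Z + (n - 1)) (S ∪ {t₀, t₁}) ∧
      IsRegularPDA (fun i j : Fin (n + n) => liftArray n P₀ P₁ t₀ t₁ i j) (S ∪ {t₀, t₁}) n := by
  rw [liftArray_eq_blockArray]
  refine isPDA_of_valueCount hn (fun k hk => ?_) (fun s => ?_) ?_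
  · obtain ⟨c, k, hk₀, rfl⟩ := exists_shiftIdx hk
    rw [starCount_blockArray _ _ hk₀]
    cases c <;> simp only [Fintype.sum_bool, if_true, if_false, Bool.false_eq_true,
      Bool.true_eq_false, cond_true, cond_false, starCount_diagArray _ hk₀, hstar₀ k hk₀,
      hstar₁ k hk₀, add_comm]
  · rw [valueCount_blockArray]
    simp only [Fintype.sum_bool, if_true, if_false, Bool.false_eq_true,
      Bool.true_eq_false, cond_true, cond_false, valueCount_diagArray, hcount₀, hcount₁,
      mem_union, mem_insert, mem_singleton]
    by_cases hs : s ∈ S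
    · have : t₀ ≠ s := fun h => ht₀ (h ▸ hs)
      have : t₁ ≠ s := fun h => ht₁ (h ▸ hs)
      simp [*]
    · by_cases h₀ : t₀ = s <;> by_cases h₁ : t₁ = s <;> simp_all [eq_comm]
  · refine IsBlackburn.blockArray (fun a c => ?_) fun a b c d hblk => ?_
    · cases a <;> cases c <;> first | exact isBlackburn_diagArray _ | assumption
    · cases a <;> cases b <;> cases c <;> cases d <;>
        simp only [if_true, if_false, Bool.false_eq_true, Bool.true_eq_false, cond_true,
          cond_false, ne_eq, not_true_eq_false] at hblk ⊢ <;>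
        first
        | exact hcompat
        | exact hcompat.symm
        | exact (noCommonValue_diagArray hne).blackburnCompat _ _
        | exact (noCommonValue_diagArray hne).symm.blackburnCompat _ _
        | exact (NoCommonValue.diagArray_of_valueCount ‹_› ‹_›).blackburnCompat _ _
        | exact (NoCommonValue.diagArray_of_valueCount ‹_› ‹_›).symm.blackburnCompat _ _

theorem stmt_17_general (r x t t₀ t₁ : ℕ) (hr : 1 ≤ r)
    (ht₀ : ∀ (b : Bool) (i j : ℕ), i < 2 ^ r → j < 2 ^ r → A2r r b x i j ≠ some t₀)
    (ht₁ : ∀ (b : Bool) (i j : ℕ), i < 2 ^ r → j < 2 ^ r → A2r r b x i j ≠ some t₁)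
    (hne : t₀ ≠ t₁) :
    BBCompat (fun i j : Fin (2 ^ r) => A2r r false x i j)
      (fun i j : Fin (2 ^ r) => A2r r true x i j) (Ig (2 ^ r) t) ∧
    (∀ (b : Bool) (k : Fin (2 ^ r)),
      colStars (fun i j : Fin (2 ^ r) => A2r r b x i j) k = 2 ^ r - (r + 1)) ∧
    ∃ S : Finset ℕ,
      IsPDA
        (fun i j : Fin (2 ^ (r + 1)) =>
          if (i : ℕ) < 2 ^ r then
            if (j : ℕ) < 2 ^ r then A2r r false x i j
            else if (i : ℕ) + 2 ^ r = (j : ℕ) then some t₀ else none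
          else
            if (j : ℕ) < 2 ^ r then (if (i : ℕ) = (j : ℕ) + 2 ^ r then some t₁ else none)
            else A2r r true x ((i : ℕ) - 2 ^ r) ((j : ℕ) - 2 ^ r))
        (2 ^ (r + 1) - (r + 2)) S ∧
      IsRegularPDA
        (fun i j : Fin (2 ^ (r + 1)) =>
          if (i : ℕ) < 2 ^ r then
            if (j : ℕ) < 2 ^ r then A2r r false x i j
            else if (i : ℕ) + 2 ^ r = (j : ℕ) then some t₀ else none
          else
            if (j : ℕ) < 2 ^ r then (if (i : ℕ) = (j : ℕ) + 2 ^ r then some t₁ else none)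
            else A2r r true x ((i : ℕ) - 2 ^ r) ((j : ℕ) - 2 ^ r))
        S (2 ^ r) ∧
      S.card = 2 * r + 4 := by
  obtain ⟨m, rfl⟩ : ∃ m, r = m + 1 := ⟨r - 1, by omega⟩
  have hIco : ∀ t', (∀ b i j, i < 2 ^ (m + 1) → j < 2 ^ (m + 1) → A2r (m + 1) b x i j ≠ some t') →
      t' ∉ Ico x (x + 2 * m + 4) := fun t' ht' hmem => by
    obtain ⟨i, j, hi, hj, h⟩ := exists_of_valueCount_pos (Q := A2r (m + 1) false x)
      (by rw [A2r_valueCount, if_pos hmem]; positivity)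
    exact ht' false i j hi hj h
  have hlift := liftArray_isPDA (by positivity) (by ring)
    (A2r_isBlackburn m false x) (A2r_isBlackburn m true x) (A2r_blackburnCompat m x t₀ t₁)
    (fun _ hk => A2r_starCount m false x hk) (fun _ hk => A2r_starCount m true x hk)
    (A2r_valueCount m false x) (A2r_valueCount m true x) (hIco t₀ ht₀) (hIco t₁ ht₁) hne
  refine ⟨(A2r_blackburnCompat m x t t).bbCompat, fun b k => ?_,
    Ico x (x + 2 * m + 4) ∪ {t₀, t₁}, ?_, ?_, ?_⟩
  · rw [colStars_eq_starCount, A2r_starCount m b x k.2]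
  · have : m + 2 ≤ 2 ^ (m + 1) := Nat.lt_two_pow_self
    rw [pow_succ 2 (m + 1), mul_two,
      show 2 ^ (m + 1) + 2 ^ (m + 1) - (m + 1 + 2) = 2 ^ (m + 1) - (m + 2) + (2 ^ (m + 1) - 1) by
        omega]
    exact hlift.1
  · rw [pow_succ 2 (m + 1), mul_two]
    exact hlift.2
  · rw [card_union_of_disjoint, card_insert_of_notMem (by simpa using hne), card_singleton,
      Nat.card_Ico]
    · omega
    · simp only [disjoint_insert_right, disjoint_singleton_right]
      exact ⟨hIco t₀ ht₀, hIco t₁ ht₁⟩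

/-- **`2^r` recursive family.** For every `r ≥ 1`, the pair
`{A_{2^r}(x), A'_{2^r}(x)}` is Blackburn-compatible w.r.t. `I_{2^r}(t)` for any `t` not
among their integers; each of the two arrays has exactly `2^r − r − 1` stars per column;
and the lifted `2^{r+1} × 2^{r+1}` block array (with `A_{2^r}(x)`, `A'_{2^r}(x)` on the
diagonal and integer-disjoint copies `I_{2^r}(t₀)`, `I_{2^r}(t₁)` off-diagonal) is a
`2^r`-regular `(2^{r+1}, 2^{r+1}, 2^{r+1} − r − 2, 2r + 4)` PDA. -/
theorem stmt_17 (r x t t₀ t₁ : ℕ) (hr : 1 ≤ r)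
    (ht : ∀ (b : Bool) (i j : ℕ), i < 2 ^ r → j < 2 ^ r → A2r r b x i j ≠ some t)
    (ht₀ : ∀ (b : Bool) (i j : ℕ), i < 2 ^ r → j < 2 ^ r → A2r r b x i j ≠ some t₀)
    (ht₁ : ∀ (b : Bool) (i j : ℕ), i < 2 ^ r → j < 2 ^ r → A2r r b x i j ≠ some t₁)
    (hne : t₀ ≠ t₁) :
    BBCompat (fun i j : Fin (2 ^ r) => A2r r false x i j)
      (fun i j : Fin (2 ^ r) => A2r r true x i j) (Ig (2 ^ r) t) ∧
    (∀ (b : Bool) (k : Fin (2 ^ r)),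
      colStars (fun i j : Fin (2 ^ r) => A2r r b x i j) k = 2 ^ r - (r + 1)) ∧
    ∃ S : Finset ℕ,
      IsPDA
        (fun i j : Fin (2 ^ (r + 1)) =>
          if (i : ℕ) < 2 ^ r then
            if (j : ℕ) < 2 ^ r then A2r r false x i j
            else if (i : ℕ) + 2 ^ r = (j : ℕ) then some t₀ else none
          else
            if (j : ℕ) < 2 ^ r then (if (i : ℕ) = (j : ℕ) + 2 ^ r then some t₁ else none)
            else A2r r true x ((i : ℕ) - 2 ^ r) ((j : ℕ) - 2 ^ r))
        (2 ^ (r + 1) - (r + 2)) S ∧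
      IsRegularPDA
        (fun i j : Fin (2 ^ (r + 1)) =>
          if (i : ℕ) < 2 ^ r then
            if (j : ℕ) < 2 ^ r then A2r r false x i j
            else if (i : ℕ) + 2 ^ r = (j : ℕ) then some t₀ else none
          else
            if (j : ℕ) < 2 ^ r then (if (i : ℕ) = (j : ℕ) + 2 ^ r then some t₁ else none)
            else A2r r true x ((i : ℕ) - 2 ^ r) ((j : ℕ) - 2 ^ r))
        S (2 ^ r) ∧
      S.card = 2 * r + 4 :=
  stmt_17_general r x t t₀ t₁ hr ht₀ ht₁ hne
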